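/- Every positive integer n admits a minimal signed almost binary partition (P, N) in normal form, i.e., one achieving τ(n) = |P| + |N| such that: (A) P and N are disjoint as sets; (B) P and N are the greedy almost binary partitions of their respective sums; (C) max(P) ∈ {⌊log₂ n⌋, ⌊log₂ n⌋ + 1}. -/

import Mathlib

def nu (d : ℕ) : ℕ := 2 ^ d - 1

def IsABP (n : ℕ) (P : Multiset ℕ) : Prop :=
  (∀ i ∈ P, 1 ≤ i) ∧ (P.map nu).sum = n

noncomputable def tauP (n : ℕ) : ℕ :=
  sInf {k | ∃ P : Multiset ℕ, IsABP n P ∧ P.card = k}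

def IsSABP (n : ℕ) (P N : Multiset ℕ) : Prop :=
  (∀ i ∈ P, 1 ≤ i) ∧ (∀ j ∈ N, 1 ≤ j) ∧
    (n : ℤ) = ((P.map nu).sum : ℤ) - ((N.map nu).sum : ℤ)

noncomputable def tau (n : ℕ) : ℕ :=
  sInf {k | ∃ P N : Multiset ℕ, IsSABP n P N ∧ P.card + N.card = k}

noncomputable def tauC (n : ℕ) : ℕ :=
  sInf {k | ∃ (r : ℕ) (N : Multiset ℕ), IsSABP n {r} N ∧ 1 + N.card = k}

def greedy : ℕ → Multiset ℕ
  | 0 => 0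
  | (n+1) => Nat.log 2 (n+2) ::ₘ greedy (n + 1 - nu (Nat.log 2 (n+2)))
  decreasing_by
    have h1 : 0 < Nat.log 2 (n+2) := Nat.log_pos one_lt_two (by omega)
    have h2 : 2 ^ 1 ≤ 2 ^ Nat.log 2 (n+2) := Nat.pow_le_pow_right (by norm_num) h1
    simp only [nu] at *
    omega

open Classical in
noncomputable def dualf (n : ℕ) : ℕ :=
  if ∃ k : ℕ, 1 ≤ k ∧ n = 2 ^ k - 1 then n else 3 * 2 ^ Nat.log 2 n - n - 2

def parentT (v : ℕ × ℕ) : ℕ × ℕ := (v.1 + 1, v.2 / 2)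

def levelT (v : ℕ × ℕ) : ℕ := v.1 + 1

def treeGraph : SimpleGraph (ℕ × ℕ) where
  Adj u v := parentT u = v ∨ parentT v = u
  symm := ⟨by intro u v h; exact Or.symm h⟩
  loopless := ⟨by intro v h; simp [parentT, Prod.ext_iff] at h⟩

noncomputable def cutCard (S : Finset (ℕ × ℕ)) : ℕ :=
  Set.ncard {v : ℕ × ℕ | ¬ ((v ∈ S) ↔ (parentT v ∈ S))}

def leafCount (S : Finset (ℕ × ℕ)) : ℕ := (S.filter (fun v => v.1 = 0)).card

def completeSubtree (v : ℕ × ℕ) : Finset (ℕ × ℕ) :=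
  (Finset.range (v.1 + 1)).biUnion (fun a =>
    (Finset.Ico (v.2 * 2 ^ (v.1 - a)) ((v.2 + 1) * 2 ^ (v.1 - a))).image (fun i => (a, i)))

def Bd (d : ℕ) : Finset (ℕ × ℕ) := completeSubtree (d - 1, 0)

def cutBd (d : ℕ) (X : Finset (ℕ × ℕ)) : ℕ :=
  ((Bd d).filter (fun v => v.1 + 1 < d ∧ ¬((v ∈ X) ↔ parentT v ∈ X))).card

noncomputable def deltaB (d i : ℕ) : ℕ :=
  sInf {c | ∃ X ⊆ Bd d, X.card = i ∧ cutBd d X = c}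

noncomputable def tauC0 (n : ℕ) : ℕ := if n = 0 then 0 else tauC n

def fS (S : Finset (ℕ × ℕ)) (v : ℕ × ℕ) : ℤ :=
  if v ∈ S ∧ parentT v ∉ S then 2 ^ levelT v - 1
  else if v ∉ S ∧ parentT v ∈ S then -(2 ^ levelT v - 1)
  else 0

/-!
Among all signed almost binary partitions of `n`, take one minimising, lexicographically, the
number of parts, then `∑ 2^i`, then `∑ i`. Every defect of the normal form allows a local exchange
of parts preserving the value and lowering this cost: a part common to `P` and `N` cancels;
three parts `b, b, c` with `c ≤ b` become `b + 1, c - 1, c - 1` (or `b + 1` when `c = 1`); and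
`y + 1 ∈ P`, `y ∈ N` become `y, 1 ∈ P`. So in `P` and in `N` only the smallest part can repeat,
and at most twice, which is exactly the shape of a greedy partition. Cancellation and the last
exchange keep the parts of `N` below `max P - 1`, which pins `max P` to within one of `log₂ n`.
-/

open Multiset

lemma nu_add_one (d : ℕ) : nu d + 1 = 2 ^ d := by
  have := Nat.one_le_two_pow (n := d)
  simp only [nu]; omega

lemma nu_succ (d : ℕ) : nu (d + 1) = 2 * nu d + 1 := by
  have := nu_add_one d; have := nu_add_one (d + 1); rw [pow_succ] at *; omega

lemma nu_zero : nu 0 = 0 := rfl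

lemma greedy_eq_cons {s m : ℕ} (hm : 1 ≤ m) (hlo : nu m ≤ s) (hhi : s + 2 ≤ 2 ^ (m + 1)) :
    greedy s = m ::ₘ greedy (s - nu m) := by
  have hnu := nu_add_one m
  have h2m : 2 ^ 1 ≤ 2 ^ m := Nat.pow_le_pow_right (by norm_num) hm
  obtain ⟨k, rfl⟩ : ∃ k, s = k + 1 := ⟨s - 1, by omega⟩
  have hlog : Nat.log 2 (k + 2) = m := Nat.log_eq_of_pow_le_of_lt_pow (by omega) (by omega)
  rw [greedy, hlog]

/-- Positive parts, of which only the smallest may repeat, and at most twice. -/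
def IsGreedyForm (P : Multiset ℕ) : Prop :=
  (∀ i ∈ P, 1 ≤ i) ∧ ∀ b c, c ≤ b → ¬ b ::ₘ b ::ₘ {c} ≤ P

namespace IsGreedyForm

variable {P Q : Multiset ℕ}

lemma mono (h : IsGreedyForm P) (hQ : Q ≤ P) : IsGreedyForm Q :=
  ⟨fun i hi => h.1 i (mem_of_le hQ hi), fun b c hcb hle => h.2 b c hcb (hle.trans hQ)⟩

lemma eq_pair (h : IsGreedyForm P) {b : ℕ} (hb : b ::ₘ {b} ≤ P) (hmax : ∀ i ∈ P, i ≤ b) :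
    P = b ::ₘ {b} := by
  have hrest : P - b ::ₘ {b} = 0 := eq_zero_of_forall_notMem fun c hc => by
    refine h.2 b c (hmax c (mem_of_le (Multiset.sub_le_self _ _) hc)) ?_
    calc b ::ₘ b ::ₘ {c} = b ::ₘ {b} + {c} := by simp
      _ ≤ b ::ₘ {b} + (P - b ::ₘ {b}) := add_le_add_right (singleton_le.mpr hc) _
      _ = P := add_tsub_cancel_of_le hb
  rw [← add_tsub_cancel_of_le hb, hrest, add_zero]

lemma sum_nu_add_two_le (h : IsGreedyForm P) {m : ℕ} (hmax : ∀ i ∈ P, i ≤ m) :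
    (P.map nu).sum + 2 ≤ 2 ^ (m + 1) := by
  induction m generalizing P with
  | zero =>
    have : P = 0 := eq_zero_of_forall_notMem fun i hi => by
      have := h.1 i hi; have := hmax i hi; omega
    simp [this]
  | succ m ih =>
    have hnu := nu_add_one (m + 1)
    by_cases hpair : (m + 1) ::ₘ {m + 1} ≤ P
    · rw [h.eq_pair hpair hmax]
      simp only [map_cons, map_singleton, sum_cons, sum_singleton, pow_succ 2 (m + 1)]
      omega
    · have herase : ∀ i ∈ P.erase (m + 1), i ≤ m := fun i hi => by
        have hi' := hmax i (mem_of_mem_erase hi)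
        refine Nat.le_of_lt_succ (lt_of_le_of_ne hi' fun hieq => hpair ?_)
        rw [hieq] at hi
        calc (m + 1) ::ₘ {m + 1} ≤ (m + 1) ::ₘ P.erase (m + 1) :=
              cons_le_cons _ (singleton_le.mpr hi)
          _ = P := cons_erase (mem_of_mem_erase hi)
      have hrest := ih (h.mono (erase_le _ _)) herase
      have hle : (P.map nu).sum ≤ nu (m + 1) + ((P.erase (m + 1)).map nu).sum := by
        obtain ⟨u, hu⟩ := Multiset.le_iff_exists_add.mp (le_cons_erase P (m + 1))
        have := congrArg (fun Q => (Q.map nu).sum) hu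
        simp only [map_add, sum_add, map_cons, sum_cons] at this
        omega
      rw [pow_succ 2 (m + 1)]
      omega

theorem eq_greedy (h : IsGreedyForm P) : P = greedy (P.map nu).sum := by
  induction P using strongInductionOn with
  | ih P ih =>
  rcases eq_or_ne P 0 with rfl | hne
  · simp [greedy]
  obtain ⟨m, hm, hmax⟩ := exists_max_image id hne
  have hPm : m ::ₘ P.erase m = P := cons_erase hm
  have hsum : (P.map nu).sum = nu m + ((P.erase m).map nu).sum := by
    conv_lhs => rw [← hPm]
    simp
  rw [greedy_eq_cons (h.1 m hm) (by omega) (h.sum_nu_add_two_le hmax), hsum,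
    Nat.add_sub_cancel_left, ← ih _ (erase_lt.mpr hm) (h.mono (erase_le _ _)), hPm]

end IsGreedyForm

def weight (i : ℕ) : ℕ ×ₗ ℕ ×ₗ ℕ := toLex (1, toLex (2 ^ i, i))

def cost (P : Multiset ℕ) : ℕ ×ₗ ℕ ×ₗ ℕ := (P.map weight).sum

lemma cost_add (P Q : Multiset ℕ) : cost (P + Q) = cost P + cost Q := by
  simp [cost]

lemma cost_eq (P : Multiset ℕ) :
    cost P = toLex (card P, toLex ((P.map (2 ^ ·)).sum, P.sum)) := by
  induction P using Multiset.induction_on with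
  | empty => rfl
  | cons i P ih =>
    simp only [cost, map_cons, sum_cons] at ih ⊢
    rw [ih, weight, ← toLex_add, Prod.mk_add_mk, ← toLex_add, Prod.mk_add_mk, card_cons,
      add_comm 1]

lemma isGreedyForm_of_forall_not_lt {P : Multiset ℕ} (hP : ∀ i ∈ P, 1 ≤ i)
    (h : ∀ A ≤ P, ∀ A', (∀ i ∈ A', 1 ≤ i) → (A'.map nu).sum = (A.map nu).sum →
      ¬ cost A' < cost A) :
    IsGreedyForm P := by
  refine ⟨hP, fun b c hcb hle => ?_⟩
  rcases c with _ | _ | k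
  · exact absurd (hP 0 (mem_of_le hle (by simp))) (by simp)
  · refine h _ hle {b + 1} (by simp) (by simp [nu_succ, nu_zero]; ring) ?_
    simp [cost_eq, Prod.Lex.toLex_lt_toLex]
  · refine h _ hle ((b + 1) ::ₘ (k + 1) ::ₘ {k + 1}) (by simp) (by simp [nu_succ]; ring) ?_
    simp [cost_eq, Prod.Lex.toLex_lt_toLex, pow_succ]
    omega

lemma IsSABP.exchange {n : ℕ} {P N A B A' B' : Multiset ℕ} (h : IsSABP n P N)
    (hA : A ≤ P) (hB : B ≤ N) (hA' : ∀ i ∈ A', 1 ≤ i) (hB' : ∀ j ∈ B', 1 ≤ j)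
    (hν : ((A.map nu).sum : ℤ) - (B.map nu).sum = (A'.map nu).sum - (B'.map nu).sum) :
    IsSABP n (P - A + A') (N - B + B') := by
  obtain ⟨hP, hN, hn⟩ := h
  refine ⟨fun i hi => ?_, fun j hj => ?_, ?_⟩
  · rcases mem_add.mp hi with hi | hi
    exacts [hP i (mem_of_le (Multiset.sub_le_self _ _) hi), hA' i hi]
  · rcases mem_add.mp hj with hj | hj
    exacts [hN j (mem_of_le (Multiset.sub_le_self _ _) hj), hB' j hj]
  · have eP := congrArg (fun Q => ((Q.map nu).sum : ℤ)) (tsub_add_cancel_of_le hA)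
    have eN := congrArg (fun Q => ((Q.map nu).sum : ℤ)) (tsub_add_cancel_of_le hB)
    simp only [map_add, sum_add, Nat.cast_add] at eP eN ⊢
    linarith

lemma isSABP_replicate_one (n : ℕ) : IsSABP n (replicate n 1) 0 :=
  ⟨fun i hi => (eq_of_mem_replicate hi).ge, by simp, by simp [nu]⟩

lemma IsSABP.ne_zero_of_pos {n : ℕ} {P N : Multiset ℕ} (h : IsSABP n P N) (hn : 0 < n) :
    P ≠ 0 := by
  rintro rfl
  have := h.2.2
  simp only [map_zero, sum_zero, Nat.cast_zero, zero_sub] at this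
  omega

def IsCostMin (n : ℕ) (P N : Multiset ℕ) : Prop :=
  IsSABP n P N ∧ ∀ P' N', IsSABP n P' N' → cost P + cost N ≤ cost P' + cost N'

lemma exists_isCostMin (n : ℕ) : ∃ P N, IsCostMin n P N := by
  let f : Multiset ℕ × Multiset ℕ → ℕ ×ₗ ℕ ×ₗ ℕ := fun p => cost p.1 + cost p.2
  let S : Set (Multiset ℕ × Multiset ℕ) := {p | IsSABP n p.1 p.2}
  have hS : S.Nonempty := ⟨(replicate n 1, 0), isSABP_replicate_one n⟩
  exact ⟨_, _, Function.argminOn_mem f S hS,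
    fun P' N' h' => Function.argminOn_le f S (a := (P', N')) h'⟩

namespace IsCostMin

variable {n : ℕ} {P N : Multiset ℕ}

lemma card_eq_tau (h : IsCostMin n P N) : card P + card N = tau n := by
  refine (IsLeast.csInf_eq (s := {k | ∃ P N, IsSABP n P N ∧ card P + card N = k})
    ⟨⟨P, N, h.1, rfl⟩, ?_⟩).symm
  rintro _ ⟨P', N', h', rfl⟩
  simpa [cost_eq, ← toLex_add] using Prod.Lex.monotone_fst _ _ (h.2 P' N' h')

lemma not_exchange_lt (h : IsCostMin n P N) {A B A' B' : Multiset ℕ}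
    (hA : A ≤ P) (hB : B ≤ N) (hA' : ∀ i ∈ A', 1 ≤ i) (hB' : ∀ j ∈ B', 1 ≤ j)
    (hν : ((A.map nu).sum : ℤ) - (B.map nu).sum = (A'.map nu).sum - (B'.map nu).sum) :
    ¬ cost A' + cost B' < cost A + cost B := by
  intro hlt
  have hmin := h.2 _ _ (h.1.exchange hA hB hA' hB' hν)
  have hP : cost (P - A + A') + cost A = cost P + cost A' := by
    rw [cost_add, add_right_comm, ← cost_add, tsub_add_cancel_of_le hA]
  have hN : cost (N - B + B') + cost B = cost N + cost B' := by
    rw [cost_add, add_right_comm, ← cost_add, tsub_add_cancel_of_le hB]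
  have : cost P + cost N + (cost A + cost B) ≤ cost P + cost N + (cost A' + cost B') :=
    calc cost P + cost N + (cost A + cost B)
        ≤ cost (P - A + A') + cost (N - B + B') + (cost A + cost B) := by gcongr
      _ = cost P + cost N + (cost A' + cost B') := by
        rw [add_add_add_comm, hP, hN, add_add_add_comm]
  exact (le_of_add_le_add_left this).not_gt hlt

lemma isGreedyForm_pos (h : IsCostMin n P N) : IsGreedyForm P :=
  isGreedyForm_of_forall_not_lt h.1.1 fun _ hA _ hA' hν hlt =>
    h.not_exchange_lt (B := 0) (B' := 0) hA (zero_le N) hA' (by simp) (by simp [hν])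
      (by simpa [cost] using hlt)

lemma isGreedyForm_neg (h : IsCostMin n P N) : IsGreedyForm N :=
  isGreedyForm_of_forall_not_lt h.1.2.1 fun _ hB _ hB' hν hlt =>
    h.not_exchange_lt (A := 0) (A' := 0) (zero_le P) hB (by simp) hB' (by simp [hν])
      (by simpa [cost] using hlt)

lemma notMem_neg_of_mem_pos (h : IsCostMin n P N) {i : ℕ} (hP : i ∈ P) : i ∉ N := fun hN =>
  h.not_exchange_lt (A' := 0) (B' := 0) (singleton_le.mpr hP) (singleton_le.mpr hN)
    (by simp) (by simp) (by simp) (by simp [cost_eq, ← toLex_add, Prod.Lex.toLex_lt_toLex])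

lemma notMem_neg_of_succ_mem_pos (h : IsCostMin n P N) {y : ℕ} (hP : y + 1 ∈ P) : y ∉ N :=
  fun hN => by
  have hy1 := h.1.2.1 y hN
  have hy : 2 ^ 1 ≤ 2 ^ y := Nat.pow_le_pow_right (by norm_num) hy1
  refine h.not_exchange_lt (A' := y ::ₘ {1}) (B' := 0) (singleton_le.mpr hP)
    (singleton_le.mpr hN) (by simp; omega) (by simp) (by simp [nu_succ, nu_zero]; ring) ?_
  simp [cost_eq, ← toLex_add, Prod.Lex.toLex_lt_toLex, pow_succ]
  omega

lemma pow_le_and_lt_pow (h : IsCostMin n P N) {m : ℕ} (hm : m ∈ P) (hmax : ∀ i ∈ P, i ≤ m) :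
    2 ^ (m - 1) ≤ n ∧ n < 2 ^ (m + 1) := by
  have hn := h.1.2.2
  have hP := h.isGreedyForm_pos.sum_nu_add_two_le hmax
  have hmP : nu m ≤ (P.map nu).sum := le_sum_of_mem (mem_map_of_mem nu hm)
  have hsmall : ∀ j ∈ N, j ≤ m - 2 := by
    intro j hj
    have hjN : nu j ≤ (N.map nu).sum := le_sum_of_mem (mem_map_of_mem nu hj)
    have hjm : j ≤ m := by
      by_contra hlt
      have := Nat.pow_le_pow_right (show 0 < 2 by norm_num) (show m + 1 ≤ j by omega)
      have := nu_add_one j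
      omega
    have hj_ne : j ≠ m := fun e => h.notMem_neg_of_mem_pos hm (e ▸ hj)
    have hj_succ_ne : j + 1 ≠ m := fun e => h.notMem_neg_of_succ_mem_pos (e ▸ hm) hj
    omega
  have hN := h.isGreedyForm_neg.sum_nu_add_two_le hsmall
  have hnu := nu_add_one m
  refine ⟨?_, by omega⟩
  rcases m with _ | _ | k
  · exact absurd (h.1.1 0 hm) (by simp)
  · change (N.map nu).sum + 2 ≤ 2 at hN
    change 1 ≤ (P.map nu).sum at hmP
    change 1 ≤ n
    omega
  · change (N.map nu).sum + 2 ≤ 2 ^ (k + 1) at hN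
    change 2 ^ (k + 1) ≤ n
    rw [pow_succ 2 (k + 1)] at hnu
    omega

end IsCostMin

lemma eq_log_two_or_eq_log_two_add_one {m n : ℕ} (h₁ : 2 ^ (m - 1) ≤ n)
    (h₂ : n < 2 ^ (m + 1)) :
    m = Nat.log 2 n ∨ m = Nat.log 2 n + 1 := by
  have hn : n ≠ 0 := by have := Nat.one_le_two_pow (n := m - 1); omega
  have hlo := (Nat.le_log_iff_pow_le one_lt_two hn).mpr h₁
  have hhi := (Nat.log_lt_iff_lt_pow one_lt_two hn).mpr h₂
  omega

theorem stmt9 (n : ℕ) (hn : 1 ≤ n) :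
    ∃ P N : Multiset ℕ, IsSABP n P N ∧ P.card + N.card = tau n ∧
      (∀ i, i ∈ P → i ∉ N) ∧
      P = greedy ((P.map nu).sum) ∧ N = greedy ((N.map nu).sum) ∧
      ∃ m ∈ P, (∀ i ∈ P, i ≤ m) ∧ (m = Nat.log 2 n ∨ m = Nat.log 2 n + 1) := by
  obtain ⟨P, N, h⟩ := exists_isCostMin n
  obtain ⟨m, hm, hmax⟩ := exists_max_image id (h.1.ne_zero_of_pos hn)
  obtain ⟨h₁, h₂⟩ := h.pow_le_and_lt_pow hm hmax
  exact ⟨P, N, h.1, h.card_eq_tau, fun _ => h.notMem_neg_of_mem_pos,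
    h.isGreedyForm_pos.eq_greedy, h.isGreedyForm_neg.eq_greedy,
    m, hm, hmax, eq_log_two_or_eq_log_two_add_one h₁ h₂⟩
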